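/- arXiv:0710.5527 — 2 statements merged into one kernel-verified Lean document; each statement's English description precedes it below -/
import Mathlib

section
/- Let F : A → B be a functor with a right adjoint G. Then F is separable if and only if the unit η : Id_A → G∘F of the adjunction has a natural retraction ν : G∘F → Id_A (i.e., ν ∘ η = id as natural transformations). (Rafael's theorem, left adjoint version.) -/
open CategoryTheory

/-- A functor `F : A ⥤ B` is *separable* if the map
`Hom_A(a, a') → Hom_B(F a, F a')` induced by `F` admits a retraction which is
natural in both variables. -/
def CategoryTheory.Functor.Separable {A : Type*} {B : Type*} [Category A] [Category B]
    (F : A ⥤ B) : Prop :=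
  ∃ P : ∀ (a a' : A), (F.obj a ⟶ F.obj a') → (a ⟶ a'),
    (∀ (a a' : A) (f : a ⟶ a'), P a a' (F.map f) = f) ∧
    (∀ (a₀ a₁ b₀ b₁ : A) (u : a₀ ⟶ a₁) (v : b₀ ⟶ b₁) (h : F.obj a₁ ⟶ F.obj b₀),
      P a₀ b₁ (F.map u ≫ h ≫ F.map v) = u ≫ P a₁ b₀ h ≫ v)

/-- Rafael's theorem, left adjoint version: a functor `F` with a right adjoint `G`
is separable iff the unit of the adjunction has a natural retraction. -/
theorem rafael_left {A : Type*} {B : Type*} [Category A] [Category B]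
    (F : A ⥤ B) (G : B ⥤ A) (adj : F ⊣ G) :
    F.Separable ↔ ∃ ν : F ⋙ G ⟶ 𝟭 A, adj.unit ≫ ν = 𝟙 (𝟭 A) := by
  constructor
  · rintro ⟨P, hP1, hP2⟩
    refine ⟨⟨fun a => P (G.obj (F.obj a)) a (adj.counit.app (F.obj a)), ?_⟩, ?_⟩
    · intro a a' f
      dsimp
      have e1 : F.map (G.map (F.map f)) ≫ adj.counit.app (F.obj a') =
          adj.counit.app (F.obj a) ≫ F.map f := adj.counit.naturality (F.map f)
      have h1 := hP2 (G.obj (F.obj a)) (G.obj (F.obj a')) a' a'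
        (G.map (F.map f)) (𝟙 a') (adj.counit.app (F.obj a'))
      have h2 := hP2 (G.obj (F.obj a)) (G.obj (F.obj a)) a a'
        (𝟙 _) f (adj.counit.app (F.obj a))
      have e2 : F.map (G.map (F.map f)) ≫ adj.counit.app (F.obj a') ≫ F.map (𝟙 a') =
          F.map (𝟙 (G.obj (F.obj a))) ≫ adj.counit.app (F.obj a) ≫ F.map f := by
        simp only [CategoryTheory.Functor.map_id, Category.comp_id, Category.id_comp]
        rw [← Category.assoc, e1, Category.assoc]
        simp
      rw [e2] at h1
      rw [Category.comp_id] at h1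
      rw [Category.id_comp] at h2
      rw [← h1, h2]
    · ext a
      have h3 := hP2 a (G.obj (F.obj a)) a a
        (adj.unit.app a) (𝟙 a) (adj.counit.app (F.obj a))
      have tri : F.map (adj.unit.app a) ≫ adj.counit.app (F.obj a) = 𝟙 (F.obj a) :=
        adj.left_triangle_components a
      have e3 : F.map (adj.unit.app a) ≫ adj.counit.app (F.obj a) ≫ F.map (𝟙 a) =
          F.map (𝟙 a) := by
        simp [tri]
      rw [e3, hP1, Category.comp_id] at h3
      simp only [NatTrans.comp_app, NatTrans.id_app, Functor.id_obj]
      exact h3.symm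
  · rintro ⟨ν, hν⟩
    refine ⟨fun a a' g => adj.unit.app a ≫ G.map g ≫ ν.app a', ?_, ?_⟩
    · intro a a' f
      have h1 : adj.unit.app a ≫ (F ⋙ G).map f = f ≫ adj.unit.app a' :=
        (adj.unit.naturality f).symm
      have h2 := congrArg (fun t => NatTrans.app t a') hν
      simp only [NatTrans.comp_app, NatTrans.id_app, Functor.id_obj] at h2
      calc adj.unit.app a ≫ G.map (F.map f) ≫ ν.app a'
          = (adj.unit.app a ≫ (F ⋙ G).map f) ≫ ν.app a' := by simp
        _ = f ≫ adj.unit.app a' ≫ ν.app a' := by rw [h1]; simp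
        _ = f := by rw [h2]; simp
    · intro a₀ a₁ b₀ b₁ u v h
      have h1 : adj.unit.app a₀ ≫ (F ⋙ G).map u = u ≫ adj.unit.app a₁ :=
        (adj.unit.naturality u).symm
      have h2 : (F ⋙ G).map v ≫ ν.app b₁ = ν.app b₀ ≫ v := ν.naturality v
      simp only [Functor.comp_map] at h1 h2
      simp only [Functor.map_comp, Category.assoc]
      rw [reassoc_of% h1, h2]
end

section
/- Let F : A → B be a functor with a left adjoint G. Then F is separable if and only if the counit ε : G∘F → Id_A of the adjunction G ⊣ F has a natural section (i.e., a natural transformation σ : Id_A → G∘F with ε ∘ σ = id). (Rafael's theorem, right adjoint version.) -/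
open CategoryTheory

/-- Rafael's theorem, right adjoint version: a functor `F` with a left adjoint `G`
is separable iff the counit of the adjunction `G ⊣ F` has a natural section. -/
theorem rafael_right {A : Type*} {B : Type*} [Category A] [Category B]
    (F : A ⥤ B) (G : B ⥤ A) (adj : G ⊣ F) :
    F.Separable ↔ ∃ σ : 𝟭 A ⟶ F ⋙ G, σ ≫ adj.counit = 𝟙 (𝟭 A) := by
  constructor
  · rintro ⟨P, hret, hnat⟩
    refine ⟨⟨fun a => P a (G.obj (F.obj a)) (adj.unit.app (F.obj a)), ?_⟩, ?_⟩
    · intro a a' f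
      have h1 : f ≫ P a' (G.obj (F.obj a')) (adj.unit.app (F.obj a')) =
          P a (G.obj (F.obj a')) (F.map f ≫ adj.unit.app (F.obj a')) := by
        have := hnat a a' (G.obj (F.obj a')) (G.obj (F.obj a')) f
          (𝟙 _) (adj.unit.app (F.obj a'))
        simpa using this.symm
      have h2 : P a (G.obj (F.obj a)) (adj.unit.app (F.obj a)) ≫
          G.map (F.map f) =
          P a (G.obj (F.obj a')) (adj.unit.app (F.obj a) ≫
            F.map (G.map (F.map f))) := by
        have := hnat a a (G.obj (F.obj a)) (G.obj (F.obj a')) (𝟙 a)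
          (G.map (F.map f)) (adj.unit.app (F.obj a))
        simpa using this.symm
      have hu : F.map f ≫ adj.unit.app (F.obj a') =
          adj.unit.app (F.obj a) ≫ F.map (G.map (F.map f)) := by
        simpa using adj.unit.naturality (F.map f)
      simp only [Functor.id_obj, Functor.id_map, Functor.comp_obj, Functor.comp_map]
      rw [h1, h2, hu]
    · ext a
      simp only [Functor.id_obj, NatTrans.comp_app, NatTrans.id_app]
      have key := hnat a a (G.obj (F.obj a)) a (𝟙 a) (adj.counit.app a)
        (adj.unit.app (F.obj a))
      simp only [Category.id_comp, Category.comp_id,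
        adj.right_triangle_components] at key
      rw [hret] at key
      exact key.symm
  · rintro ⟨σ, hσ⟩
    have hσ' : ∀ a : A, σ.app a ≫ adj.counit.app a = 𝟙 a := by
      intro a
      have := congrArg (fun t => NatTrans.app t a) hσ
      simpa using this
    refine ⟨fun a a' g => σ.app a ≫ G.map g ≫ adj.counit.app a', ?_, ?_⟩
    · intro a a' f
      have hc : G.map (F.map f) ≫ adj.counit.app a' = adj.counit.app a ≫ f := by
        simpa using adj.counit.naturality f
      show σ.app a ≫ G.map (F.map f) ≫ adj.counit.app a' = f
      rw [hc, ← Category.assoc, hσ' a]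
      simp
    · intro a₀ a₁ b₀ b₁ u v h
      have h1 : σ.app a₀ ≫ G.map (F.map u) = u ≫ σ.app a₁ := by
        simpa using (σ.naturality u).symm
      have h2 : G.map (F.map v) ≫ adj.counit.app b₁ = adj.counit.app b₀ ≫ v := by
        simpa using adj.counit.naturality v
      simp only [Functor.map_comp, ← Category.assoc]
      rw [h1]
      simp only [Category.assoc, h2]
end
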